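/- Let (H, β) be a Hom-Hopf algebra with β bijective, M a linear space and ζ_M : M → M bijective, and let H ⊗ H^{op} be the tensor product Hom-algebra (with H^{op} the opposite Hom-algebra). Then left (H ⊗ H^{op})-module structures on (M, ζ_M) correspond bijectively to H-bimodule structures on (M, ζ_M), via (h ⊗ g)·m = (β^{-1}(h)·ζ_M^{-1}(m))·g. -/
import Mathlib


open TensorProduct

namespace HomHopf

variable (k : Type) [Field k]

/-- A Hom-algebra. -/
structure HomAlg (A : Type) [AddCommGroup A] [Module k A] : Type where
  mul : A →ₗ[k] A →ₗ[k] A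
  one : A
  zmap : A →ₗ[k] A
  zmap_mul : ∀ a b, zmap (mul a b) = mul (zmap a) (zmap b)
  hom_assoc : ∀ a b c, mul (zmap a) (mul b c) = mul (mul a b) (zmap c)
  zmap_one : zmap one = one
  one_mul : ∀ a, mul one a = zmap a
  mul_one : ∀ a, mul a one = zmap a

/-- A Hom-bialgebra. -/
structure Bialg (H : Type) [AddCommGroup H] [Module k H] : Type where
  mul : H →ₗ[k] H →ₗ[k] H
  one : H
  comul : H →ₗ[k] H ⊗[k] H
  counit : H →ₗ[k] k
  bmap : H →ₗ[k] H
  bmap_mul : ∀ a b, bmap (mul a b) = mul (bmap a) (bmap b)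
  hom_assoc : ∀ a b c, mul (bmap a) (mul b c) = mul (mul a b) (bmap c)
  bmap_one : bmap one = one
  one_mul : ∀ a, mul one a = bmap a
  mul_one : ∀ a, mul a one = bmap a
  comul_bmap : ∀ c, comul (bmap c) = TensorProduct.map bmap bmap (comul c)
  coassoc : ∀ c, TensorProduct.map bmap comul (comul c)
      = TensorProduct.assoc k H H H (TensorProduct.map comul bmap (comul c))
  counit_bmap : ∀ c, counit (bmap c) = counit c
  counit_comul : ∀ c,
      TensorProduct.lid k H (TensorProduct.map counit LinearMap.id (comul c)) = bmap c
  comul_counit : ∀ c,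
      TensorProduct.rid k H (TensorProduct.map LinearMap.id counit (comul c)) = bmap c
  comul_mul : ∀ a b, comul (mul a b) = TensorProduct.map₂ mul mul (comul a) (comul b)
  comul_one : comul one = one ⊗ₜ[k] one
  counit_mul : ∀ a b, counit (mul a b) = counit a * counit b
  counit_one : counit one = 1

/-- A Hom-Hopf algebra. -/
structure Hopf (H : Type) [AddCommGroup H] [Module k H] extends Bialg k H where
  S : H →ₗ[k] H
  S_mul_id : ∀ h,
      TensorProduct.lift mul (TensorProduct.map S LinearMap.id (comul h)) = counit h • one
  id_mul_S : ∀ h,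
      TensorProduct.lift mul (TensorProduct.map LinearMap.id S (comul h)) = counit h • one
  S_bmap : ∀ h, S (bmap h) = bmap (S h)

variable {H : Type} [AddCommGroup H] [Module k H]
variable {M N P V W U : Type}
  [AddCommGroup M] [Module k M] [AddCommGroup N] [Module k N]
  [AddCommGroup P] [Module k P] [AddCommGroup V] [Module k V]
  [AddCommGroup W] [Module k W] [AddCommGroup U] [Module k U]

/-- Left Hom-module. -/
structure IsLMod (A : Bialg k H) (ζ : M →ₗ[k] M) (act : H →ₗ[k] M →ₗ[k] M) : Prop where
  assoc : ∀ a b m, act (A.bmap a) (act b m) = act (A.mul a b) (ζ m)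
  zeta_act : ∀ a m, ζ (act a m) = act (A.bmap a) (ζ m)
  one_act : ∀ m, act A.one m = ζ m

/-- Right Hom-module. -/
structure IsRMod (A : Bialg k H) (ζ : M →ₗ[k] M) (ract : M →ₗ[k] H →ₗ[k] M) : Prop where
  assoc : ∀ m a b, ract (ract m a) (A.bmap b) = ract (ζ m) (A.mul a b)
  zeta_act : ∀ m a, ζ (ract m a) = ract (ζ m) (A.bmap a)
  act_one : ∀ m, ract m A.one = ζ m

/-- Left Hom-module over a plain Hom-algebra structure (given by raw data). -/
structure IsLModOf {A : Type} [AddCommGroup A] [Module k A]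
    (mul : A →ₗ[k] A →ₗ[k] A) (one : A) (zmap : A →ₗ[k] A)
    (ζ : M →ₗ[k] M) (act : A →ₗ[k] M →ₗ[k] M) : Prop where
  assoc : ∀ a b m, act (zmap a) (act b m) = act (mul a b) (ζ m)
  zeta_act : ∀ a m, ζ (act a m) = act (zmap a) (ζ m)
  one_act : ∀ m, act one m = ζ m

/-- Right Hom-module over a plain Hom-algebra structure. -/
structure IsRModOf {A : Type} [AddCommGroup A] [Module k A]
    (mul : A →ₗ[k] A →ₗ[k] A) (one : A) (zmap : A →ₗ[k] A)
    (ζ : M →ₗ[k] M) (ract : M →ₗ[k] A →ₗ[k] M) : Prop where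
  assoc : ∀ m a b, ract (ract m a) (zmap b) = ract (ζ m) (mul a b)
  zeta_act : ∀ m a, ζ (ract m a) = ract (ζ m) (zmap a)
  act_one : ∀ m, ract m one = ζ m

/-- Left Hom-comodule. -/
structure IsLCom (A : Bialg k H) (ζ : M →ₗ[k] M) (ρ : M →ₗ[k] H ⊗[k] M) : Prop where
  coact_zeta : ∀ m, ρ (ζ m) = TensorProduct.map A.bmap ζ (ρ m)
  counit_coact : ∀ m, TensorProduct.lid k M (TensorProduct.map A.counit LinearMap.id (ρ m)) = ζ m
  coassoc : ∀ m, TensorProduct.map A.bmap ρ (ρ m)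
      = TensorProduct.assoc k H H M (TensorProduct.map A.comul ζ (ρ m))

/-- Right Hom-comodule. -/
structure IsRCom (A : Bialg k H) (ζ : M →ₗ[k] M) (ρ : M →ₗ[k] M ⊗[k] H) : Prop where
  coact_zeta : ∀ m, ρ (ζ m) = TensorProduct.map ζ A.bmap (ρ m)
  coact_counit : ∀ m, TensorProduct.rid k M (TensorProduct.map LinearMap.id A.counit (ρ m)) = ζ m
  coassoc : ∀ m, TensorProduct.map ρ A.bmap (ρ m)
      = (TensorProduct.assoc k M H H).symm (TensorProduct.map ζ A.comul (ρ m))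

/-- `(h·m)_{[-1]} ⊗ (h·m)_{[0]} = h_1 m_{[-1]} ⊗ h_2 · m_{[0]}`. -/
def LLcompat (A : Bialg k H) (act : H →ₗ[k] M →ₗ[k] M) (ρ : M →ₗ[k] H ⊗[k] M) : Prop :=
  ∀ h m, ρ (act h m) = TensorProduct.map₂ A.mul act (A.comul h) (ρ m)

/-- `(h·m)_{(0)} ⊗ (h·m)_{(1)} = h_1 · m_{(0)} ⊗ h_2 m_{(1)}`. -/
def LRcompat (A : Bialg k H) (act : H →ₗ[k] M →ₗ[k] M) (ρ : M →ₗ[k] M ⊗[k] H) : Prop :=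
  ∀ h m, ρ (act h m) = TensorProduct.map₂ act A.mul (A.comul h) (ρ m)

/-- `(m·h)_{[-1]} ⊗ (m·h)_{[0]} = m_{[-1]} h_1 ⊗ m_{[0]} · h_2`. -/
def RLcompat (A : Bialg k H) (ract : M →ₗ[k] H →ₗ[k] M) (ρ : M →ₗ[k] H ⊗[k] M) : Prop :=
  ∀ m h, ρ (ract m h) = TensorProduct.map₂ A.mul ract (ρ m) (A.comul h)

/-- `(m·h)_{(0)} ⊗ (m·h)_{(1)} = m_{(0)} · h_1 ⊗ m_{(1)} h_2`. -/
def RRcompat (A : Bialg k H) (ract : M →ₗ[k] H →ₗ[k] M) (ρ : M →ₗ[k] M ⊗[k] H) : Prop :=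
  ∀ m h, ρ (ract m h) = TensorProduct.map₂ ract A.mul (ρ m) (A.comul h)

/-- Four-angle H-Hopf module. -/
structure IsFourAngle (A : Hopf k H) (ζ : M →ₗ[k] M)
    (lact : H →ₗ[k] M →ₗ[k] M) (ract : M →ₗ[k] H →ₗ[k] M)
    (ρl : M →ₗ[k] H ⊗[k] M) (ρr : M →ₗ[k] M ⊗[k] H) : Prop where
  lmod : IsLMod k A.toBialg ζ lact
  rmod : IsRMod k A.toBialg ζ ract
  bimod : ∀ a m b, lact (A.bmap a) (ract m b) = ract (lact a m) (A.bmap b)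
  lcom : IsLCom k A.toBialg ζ ρl
  rcom : IsRCom k A.toBialg ζ ρr
  bicom : ∀ m, TensorProduct.map A.bmap ρr (ρl m)
      = TensorProduct.assoc k H M H (TensorProduct.map ρl A.bmap (ρr m))
  cll : LLcompat k A.toBialg lact ρl
  clr : LRcompat k A.toBialg lact ρr
  crl : RLcompat k A.toBialg ract ρl
  crr : RRcompat k A.toBialg ract ρr

/-- Yetter–Drinfel'd compatibility, stated via arbitrary finite representations of `Δ(h)`. -/
def ydCompat (A : Bialg k H) (ract : V →ₗ[k] H →ₗ[k] V) (ρ : V →ₗ[k] V ⊗[k] H) : Prop :=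
  ∀ (v : V) (h : H) (ι : Type) (s : Finset ι) (h1 h2 : ι → H),
    A.comul h = ∑ i ∈ s, h1 i ⊗ₜ[k] h2 i →
    ∑ i ∈ s, TensorProduct.map LinearMap.id (A.mul (A.bmap (A.bmap (h1 i))))
        (ρ (ract v (h2 i)))
      = ∑ i ∈ s, TensorProduct.map (ract.flip (A.bmap (h1 i)))
          (((A.mul.flip (A.bmap (A.bmap (h2 i)))).comp A.bmap)) (ρ v)

/-- Right-right Yetter–Drinfel'd module. -/
structure IsYD (A : Hopf k H) (ζ : V →ₗ[k] V)
    (ract : V →ₗ[k] H →ₗ[k] V) (ρ : V →ₗ[k] V ⊗[k] H) : Prop where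
  rmod : IsRMod k A.toBialg ζ ract
  rcom : IsRCom k A.toBialg ζ ρ
  compat : ydCompat k A.toBialg ract ρ

/-- The braiding `c_{V,W}(v ⊗ w) = ζ_W⁻¹(w_(0)) ⊗ ζ_V⁻¹(v) ◁ β⁻²(w_(1))`. -/
noncomputable def braid (ract : V →ₗ[k] H →ₗ[k] V) (ζVinv : V →ₗ[k] V)
    (ρ : W →ₗ[k] W ⊗[k] H) (ζWinv : W →ₗ[k] W) (βinv : H →ₗ[k] H) :
    V ⊗[k] W →ₗ[k] W ⊗[k] V :=
  (TensorProduct.map LinearMap.id (TensorProduct.lift (ract.comp ζVinv))).comp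
    ((TensorProduct.leftComm k V W H).toLinearMap.comp
      (TensorProduct.map LinearMap.id ((TensorProduct.map ζWinv (βinv.comp βinv)).comp ρ)))

/-- The action on the tensor product of two YD modules:
`(v ⊗ w) ◁ h = v ◁ β⁻¹(h_1) ⊗ w ◁ β⁻¹(h_2)`. -/
noncomputable def ydAct (A : Bialg k H) (βinv : H →ₗ[k] H)
    (ractV : V →ₗ[k] H →ₗ[k] V) (ractW : W →ₗ[k] H →ₗ[k] W) :
    V ⊗[k] W →ₗ[k] H →ₗ[k] V ⊗[k] W :=
  (TensorProduct.map₂ ractV ractW).compl₂ ((TensorProduct.map βinv βinv).comp A.comul)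

/-- The coaction on the tensor product of two YD modules:
`ρ(v ⊗ w) = v_(0) ⊗ w_(0) ⊗ β⁻¹(v_(1) w_(1))`. -/
noncomputable def ydCoact (A : Bialg k H) (βinv : H →ₗ[k] H)
    (ρV : V →ₗ[k] V ⊗[k] H) (ρW : W →ₗ[k] W ⊗[k] H) :
    V ⊗[k] W →ₗ[k] (V ⊗[k] W) ⊗[k] H :=
  (TensorProduct.map LinearMap.id (βinv.comp (TensorProduct.lift A.mul))).comp
    ((TensorProduct.tensorTensorTensorComm k V H W H).toLinearMap.comp
      (TensorProduct.map ρV ρW))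


/-- The correspondence `(h ⊗ g)·m = (β⁻¹(h)·ζ_M⁻¹(m))·g` between `H ⊗ H^{op}`-actions and
bimodule structures. -/
def actBimodCond (A : Hopf k H) (βinv : H →ₗ[k] H) (ζMinv : M →ₗ[k] M)
    (act : H ⊗[k] H →ₗ[k] M →ₗ[k] M)
    (lact : H →ₗ[k] M →ₗ[k] M) (ract : M →ₗ[k] H →ₗ[k] M) : Prop :=
  ∀ (h g : H) (m : M), act (h ⊗ₜ[k] g) m = ract (lact (βinv h) (ζMinv m)) g

/-- left `H ⊗ H^{op}`-module structures on `(M, ζ_M)` correspond bijectively to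
`H`-bimodule structures, via `(h ⊗ g)·m = (β⁻¹(h)·ζ_M⁻¹(m))·g`. -/
theorem tensor_op_modules_are_bimodules (H : Type) [AddCommGroup H] [Module k H]
    (A : Hopf k H) (βe : H ≃ₗ[k] H) (hβ : βe.toLinearMap = A.bmap)
    (M : Type) [AddCommGroup M] [Module k M] (ζMe : M ≃ₗ[k] M) :
    (∀ act : H ⊗[k] H →ₗ[k] M →ₗ[k] M,
      IsLModOf k (TensorProduct.map₂ A.mul A.mul.flip) (A.one ⊗ₜ[k] A.one)
          (TensorProduct.map A.bmap A.bmap) ζMe.toLinearMap act →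
      ∃ (lact : H →ₗ[k] M →ₗ[k] M) (ract : M →ₗ[k] H →ₗ[k] M),
        IsLMod k A.toBialg ζMe.toLinearMap lact ∧
        IsRMod k A.toBialg ζMe.toLinearMap ract ∧
        (∀ a m b, lact (A.bmap a) (ract m b) = ract (lact a m) (A.bmap b)) ∧
        actBimodCond k A βe.symm.toLinearMap ζMe.symm.toLinearMap act lact ract) ∧
    (∀ (lact : H →ₗ[k] M →ₗ[k] M) (ract : M →ₗ[k] H →ₗ[k] M),
      IsLMod k A.toBialg ζMe.toLinearMap lact →
      IsRMod k A.toBialg ζMe.toLinearMap ract →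
      (∀ a m b, lact (A.bmap a) (ract m b) = ract (lact a m) (A.bmap b)) →
      ∃ act : H ⊗[k] H →ₗ[k] M →ₗ[k] M,
        IsLModOf k (TensorProduct.map₂ A.mul A.mul.flip) (A.one ⊗ₜ[k] A.one)
          (TensorProduct.map A.bmap A.bmap) ζMe.toLinearMap act ∧
        actBimodCond k A βe.symm.toLinearMap ζMe.symm.toLinearMap act lact ract) ∧
    (∀ (act : H ⊗[k] H →ₗ[k] M →ₗ[k] M)
        (lact lact' : H →ₗ[k] M →ₗ[k] M) (ract ract' : M →ₗ[k] H →ₗ[k] M),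
      IsLMod k A.toBialg ζMe.toLinearMap lact →
      IsRMod k A.toBialg ζMe.toLinearMap ract →
      IsLMod k A.toBialg ζMe.toLinearMap lact' →
      IsRMod k A.toBialg ζMe.toLinearMap ract' →
      actBimodCond k A βe.symm.toLinearMap ζMe.symm.toLinearMap act lact ract →
      actBimodCond k A βe.symm.toLinearMap ζMe.symm.toLinearMap act lact' ract' →
      lact = lact' ∧ ract = ract') ∧
    (∀ (act act' : H ⊗[k] H →ₗ[k] M →ₗ[k] M)
        (lact : H →ₗ[k] M →ₗ[k] M) (ract : M →ₗ[k] H →ₗ[k] M),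
      actBimodCond k A βe.symm.toLinearMap ζMe.symm.toLinearMap act lact ract →
      actBimodCond k A βe.symm.toLinearMap ζMe.symm.toLinearMap act' lact ract →
      act = act') := by
  classical
  have hβi : ∀ h, βe.symm (A.bmap h) = h := fun h => by
    rw [← hβ]; exact βe.symm_apply_apply h
  have hβi' : ∀ h, A.bmap (βe.symm h) = h := fun h => by
    rw [← hβ]; exact βe.apply_symm_apply h
  have hβinj : Function.Injective A.bmap := by
    rw [← hβ]; exact βe.injective
  have hβi1 : βe.symm A.one = A.one := by
    apply hβinj; rw [hβi', A.bmap_one]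
  have hζ : ∀ m, ζMe.symm (ζMe m) = m := fun m => ζMe.symm_apply_apply m
  have hζ' : ∀ m, ζMe (ζMe.symm m) = m := fun m => ζMe.apply_symm_apply m
  have hζinj : Function.Injective ζMe := ζMe.injective
  have hβimul : ∀ a b, βe.symm (A.mul a b) = A.mul (βe.symm a) (βe.symm b) := by
    intro a b; apply hβinj
    rw [hβi', A.bmap_mul, hβi', hβi']
  have h11 : A.mul A.one A.one = A.one := by rw [A.one_mul, A.bmap_one]
  refine ⟨?_, ?_, ?_, ?_⟩
  · -- Part 1: from act to (lact, ract)
    intro act hact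
    set lact : H →ₗ[k] M →ₗ[k] M := act.comp ((TensorProduct.mk k H H).flip A.one) with hl
    set ract : M →ₗ[k] H →ₗ[k] M := (act.comp (TensorProduct.mk k H H A.one)).flip with hr
    have hlv : ∀ h m, lact h m = act (h ⊗ₜ[k] A.one) m := fun h m => rfl
    have hrv : ∀ m g, ract m g = act (A.one ⊗ₜ[k] g) m := fun m g => rfl
    refine ⟨lact, ract, ?_, ?_, ?_, ?_⟩
    · constructor
      · intro a b m
        have := hact.assoc (a ⊗ₜ[k] A.one) (b ⊗ₜ[k] A.one) m
        simpa [hlv, LinearMap.flip_apply, A.bmap_one, h11, A.mul_one, A.one_mul] using this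
      · intro a m
        have := hact.zeta_act (a ⊗ₜ[k] A.one) m
        simpa [hlv, A.bmap_one] using this
      · intro m
        simpa [hlv] using hact.one_act m
    · constructor
      · intro m a b
        have := hact.assoc (A.one ⊗ₜ[k] b) (A.one ⊗ₜ[k] a) m
        simpa [hrv, LinearMap.flip_apply, A.bmap_one, h11] using this
      · intro m a
        have := hact.zeta_act (A.one ⊗ₜ[k] a) m
        simpa [hrv, A.bmap_one] using this
      · intro m
        simpa [hrv] using hact.one_act m
    · intro a m b
      have h1 := hact.assoc (a ⊗ₜ[k] A.one) (A.one ⊗ₜ[k] b) m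
      have h2 := hact.assoc (A.one ⊗ₜ[k] b) (a ⊗ₜ[k] A.one) m
      simp only [TensorProduct.map_tmul, TensorProduct.map₂_apply_tmul, A.bmap_one,
        LinearMap.flip_apply, A.mul_one, A.one_mul] at h1 h2
      simp only [hlv, hrv]
      rw [h1, h2]
    · intro h g m
      have key := hact.assoc (A.one ⊗ₜ[k] βe.symm g) ((βe.symm h) ⊗ₜ[k] A.one) (ζMe.symm m)
      simp only [TensorProduct.map_tmul, TensorProduct.map₂_apply_tmul, A.bmap_one,
        LinearMap.flip_apply, A.mul_one, A.one_mul, hβi', LinearEquiv.coe_coe] at key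
      rw [hζ'] at key
      simp only [hlv, hrv, LinearEquiv.coe_coe]
      exact key.symm
  · -- Part 2: from (lact, ract) to act
    intro lact ract hlmod hrmod hbi
    set F : H →ₗ[k] H →ₗ[k] M →ₗ[k] M :=
      LinearMap.mk₂ k
        (fun h g => (ract.flip g).comp ((lact (βe.symm h)).comp ζMe.symm.toLinearMap))
        (by intro h h' g; ext m; simp)
        (by intro c h g; ext m; simp)
        (by intro h g g'; ext m; simp)
        (by intro c h g; ext m; simp) with hF
    set act : H ⊗[k] H →ₗ[k] M →ₗ[k] M := TensorProduct.lift F with hact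
    have hav : ∀ h g m, act (h ⊗ₜ[k] g) m = ract (lact (βe.symm h) (ζMe.symm m)) g := by
      intro h g m; simp [hact, hF]
    have hrζi : ∀ p b, ζMe.symm (ract p b) = ract (ζMe.symm p) (βe.symm b) := by
      intro p b
      apply hζinj
      rw [hζ']
      have := hrmod.zeta_act (ζMe.symm p) (βe.symm b)
      simp only [LinearEquiv.coe_coe] at this ⊢
      rw [this, hζ', hβi']
    have key : ∀ a b a' b' m,
        act ((A.bmap a) ⊗ₜ[k] (A.bmap b)) (act (a' ⊗ₜ[k] b') m)
          = act ((A.mul a a') ⊗ₜ[k] (A.mul b' b)) (ζMe m) := by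
      intro a b a' b' m
      rw [hav, hav, hav, hβi, hβimul, hrζi]
      set q : M := ζMe.symm (lact (βe.symm a') (ζMe.symm m)) with hq
      have e1 : lact a (ract q (βe.symm b')) = ract (lact (βe.symm a) q) b' := by
        have := hbi (βe.symm a) q (βe.symm b')
        rwa [hβi', hβi'] at this
      rw [e1]
      have e2 := hrmod.assoc (lact (βe.symm a) q) b' b
      simp only [LinearEquiv.coe_coe] at e2
      rw [e2]
      have e3 : ζMe (lact (βe.symm a) q) = lact a (lact (βe.symm a') (ζMe.symm m)) := by
        have := hlmod.zeta_act (βe.symm a) q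
        simp only [LinearEquiv.coe_coe] at this
        rw [this, hβi', hq, hζ']
      have e4 : lact a (lact (βe.symm a') (ζMe.symm m))
          = lact (A.mul (βe.symm a) (βe.symm a')) m := by
        have := hlmod.assoc (βe.symm a) (βe.symm a') (ζMe.symm m)
        rw [hβi'] at this
        simp only [LinearEquiv.coe_coe] at this
        rw [this, hζ']
      rw [e3, e4, hζ]
    refine ⟨act, ⟨?_, ?_, ?_⟩, fun h g m => hav h g m⟩
    · intro x y m
      induction x using TensorProduct.induction_on with
      | zero => simp
      | add u v hu hv => simp only [map_add, LinearMap.add_apply] at hu hv ⊢; rw [hu, hv]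
      | tmul a b =>
        induction y using TensorProduct.induction_on with
        | zero => simp
        | add u v hu hv => simp only [map_add, LinearMap.add_apply] at hu hv ⊢; rw [hu, hv]
        | tmul a' b' =>
          simp only [TensorProduct.map_tmul, TensorProduct.map₂_apply_tmul,
            LinearMap.flip_apply]
          exact key a b a' b' m
    · intro x m
      induction x using TensorProduct.induction_on with
      | zero => simp
      | add u v hu hv => simp only [map_add, LinearMap.add_apply] at hu hv ⊢; rw [hu, hv]
      | tmul a b =>
        simp only [TensorProduct.map_tmul]
        rw [hav, hav, hβi]
        simp only [LinearEquiv.coe_coe]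
        rw [hζ]
        have h1 := hrmod.zeta_act (lact (βe.symm a) (ζMe.symm m)) b
        simp only [LinearEquiv.coe_coe] at h1
        rw [h1]
        have h2 := hlmod.zeta_act (βe.symm a) (ζMe.symm m)
        simp only [LinearEquiv.coe_coe] at h2
        rw [h2, hβi', hζ']
    · intro m
      rw [hav, hβi1]
      have h1 := hlmod.one_act (ζMe.symm m)
      simp only [LinearEquiv.coe_coe] at h1 ⊢
      rw [h1, hζ']
      exact hrmod.act_one m
  · -- Part 3: uniqueness of (lact, ract)
    intro act lact lact' ract ract' hl hr hl' hr' hc hc'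
    constructor
    · ext h m
      have e1 := hc (A.bmap h) A.one (ζMe m)
      have e2 := hc' (A.bmap h) A.one (ζMe m)
      rw [e2] at e1
      simp only [LinearEquiv.coe_coe, hβi, hζ] at e1
      have r1 := hr.act_one (lact h m)
      have r2 := hr'.act_one (lact' h m)
      simp only [LinearEquiv.coe_coe] at r1 r2
      rw [r1, r2] at e1
      exact (hζinj e1).symm
    · ext m g
      have e1 := hc A.one g m
      have e2 := hc' A.one g m
      rw [e2] at e1
      simp only [LinearEquiv.coe_coe, hβi1] at e1
      have l1 := hl.one_act (ζMe.symm m)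
      have l2 := hl'.one_act (ζMe.symm m)
      simp only [LinearEquiv.coe_coe] at l1 l2
      rw [l1, hζ'] at e1
      rw [l2, hζ'] at e1
      exact e1.symm
  · -- Part 4: uniqueness of act
    intro act act' lact ract hc hc'
    apply TensorProduct.ext'
    intro h g
    ext m
    rw [hc h g m, hc' h g m]

end HomHopf
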